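/- Entropy integral bound: the function u ↦ log^{1/2}(1 + 1/u) is integrable on (0, R] for every R > 0, and ∫_0^R log^{1/2}(1 + 1/u) du ≤ R·log^{1/2}(1 + 1/R) + log(1+R)/log^{1/2}(1 + 1/R) for R < 1. -/

import Mathlib

/-!
Concavity of the square root gives `√a ≤ √b + (a - b) / (2√b)`; with `b = log (1 + 1/R)` and
`a = log (1 + 1/u)` this reduces the bound to the exact integral
`∫₀ᴿ log (1 + 1/u) du = R log (1 + 1/R) + log (1 + R)`, obtained from
`log (1 + 1/u) = log (1 + u) - log u`.
-/

open MeasureTheory Real Set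

theorem sqrt_le_sqrt_add_sub_div_two_mul_sqrt {a b : ℝ} (ha : 0 ≤ a) (hb : 0 < b) :
    √a ≤ √b + (a - b) / (2 * √b) := by
  have hsb : 0 < √b := sqrt_pos.2 hb
  rw [← sub_nonneg, show √b + (a - b) / (2 * √b) - √a = (√a - √b) ^ 2 / (2 * √b) by
    field_simp; linear_combination sq_sqrt hb.le - sq_sqrt ha]
  positivity

theorem log_one_add_one_div_eq {u : ℝ} (hu : 0 < u) :
    log (1 + 1 / u) = log (1 + u) - log u := by
  rw [← log_div (by positivity) hu.ne']
  congr 1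
  field_simp
  ring

theorem log_one_add_one_div_nonneg {u : ℝ} (hu : 0 ≤ u) : 0 ≤ log (1 + 1 / u) :=
  log_nonneg (by simp; positivity)

theorem intervalIntegrable_log_one_add (a b : ℝ) :
    IntervalIntegrable (fun u => log (1 + u)) volume a b := by
  simpa using intervalIntegral.intervalIntegrable_log'.comp_add_left 1 (a := 1 + a) (b := 1 + b)

theorem integrableOn_log_one_add_one_div (R : ℝ) :
    IntegrableOn (fun u => log (1 + 1 / u)) (Ioc 0 R) := by
  have h := ((intervalIntegrable_log_one_add 0 R).sub
    intervalIntegral.intervalIntegrable_log').1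
  exact h.congr_fun (fun u hu => (log_one_add_one_div_eq hu.1).symm) measurableSet_Ioc

theorem integral_log_one_add_one_div {R : ℝ} (hR : 0 < R) :
    ∫ u in Ioc 0 R, log (1 + 1 / u) = R * log (1 + 1 / R) + log (1 + R) := by
  calc ∫ u in Ioc 0 R, log (1 + 1 / u)
      = ∫ u in (0)..R, (log (1 + u) - log u) := by
        rw [intervalIntegral.integral_of_le hR.le]
        exact setIntegral_congr_fun measurableSet_Ioc fun u hu => log_one_add_one_div_eq hu.1
    _ = ((1 + R) * log (1 + R) - R) - (R * log R - R) := by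
        rw [intervalIntegral.integral_sub (intervalIntegrable_log_one_add 0 R)
          intervalIntegral.intervalIntegrable_log', intervalIntegral.integral_comp_add_left,
          integral_log, integral_log]
        simp only [add_zero, log_one]
        ring
    _ = R * log (1 + 1 / R) + log (1 + R) := by
        rw [log_one_add_one_div_eq hR]; ring

theorem integrableOn_sqrt_log_one_add_one_div (R : ℝ) :
    IntegrableOn (fun u => √(log (1 + 1 / u))) (Ioc 0 R) := by
  refine Integrable.mono' ((integrableOn_const (C := (1 / 2 : ℝ)) (by simp)).add
    ((integrableOn_log_one_add_one_div R).const_mul (1 / 2)))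
    (Measurable.aestronglyMeasurable (by fun_prop)) ?_
  rw [ae_restrict_iff' measurableSet_Ioc]
  refine ae_of_all _ fun u hu => ?_
  have := sqrt_le_sqrt_add_sub_div_two_mul_sqrt (log_one_add_one_div_nonneg hu.1.le) one_pos
  rw [norm_of_nonneg (sqrt_nonneg _)]
  simp only [sqrt_one, Pi.add_apply] at this ⊢
  linarith

theorem integral_sqrt_log_one_add_one_div_le {R : ℝ} (hR : 0 < R) :
    ∫ u in Ioc 0 R, √(log (1 + 1 / u)) ≤
      R * √(log (1 + 1 / R)) + log (1 + R) / (2 * √(log (1 + 1 / R))) := by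
  set b := log (1 + 1 / R)
  have hb : 0 < b := log_pos (by simp; positivity)
  have hlog := integrableOn_log_one_add_one_div R
  calc ∫ u in Ioc 0 R, √(log (1 + 1 / u))
      ≤ ∫ u in Ioc 0 R, ((√b - b / (2 * √b)) + log (1 + 1 / u) / (2 * √b)) := by
        refine setIntegral_mono_on (integrableOn_sqrt_log_one_add_one_div R)
          ((integrableOn_const (by simp)).add (hlog.div_const _)) measurableSet_Ioc
          fun u hu => ?_
        have := sqrt_le_sqrt_add_sub_div_two_mul_sqrt (log_one_add_one_div_nonneg hu.1.le) hb
        rwa [sub_div, ← add_sub_assoc, add_sub_right_comm] at this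
    _ = (√b - b / (2 * √b)) * R + (R * b + log (1 + R)) / (2 * √b) := by
        rw [integral_add (integrable_const _) (hlog.div_const _), integral_div,
          integral_log_one_add_one_div hR, setIntegral_const, Real.volume_real_Ioc_of_le hR.le,
          sub_zero, smul_eq_mul, mul_comm]
    _ = R * √b + log (1 + R) / (2 * √b) := by ring

theorem entropy_integral_bound :
    (∀ R : ℝ, 0 < R →
      IntegrableOn (fun u => Real.sqrt (Real.log (1 + 1 / u))) (Set.Ioc 0 R)) ∧
    ∀ R : ℝ, 0 < R → R < 1 →
      (∫ u in Set.Ioc (0:ℝ) R, Real.sqrt (Real.log (1 + 1 / u))) ≤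
        R * Real.sqrt (Real.log (1 + 1 / R)) +
          Real.log (1 + R) / Real.sqrt (Real.log (1 + 1 / R)) := by
  refine ⟨fun R _ => integrableOn_sqrt_log_one_add_one_div R, fun R hR _ => ?_⟩
  refine (integral_sqrt_log_one_add_one_div_le hR).trans (add_le_add le_rfl ?_)
  have hsqrt : 0 < √(log (1 + 1 / R)) := sqrt_pos.2 (log_pos (by simp; positivity))
  exact div_le_div_of_nonneg_left (log_nonneg (by linarith)) hsqrt (by linarith)
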